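/- arXiv:1409.0525 — 2 statements merged into one kernel-verified Lean document; each statement's English description precedes it below -/
import Mathlib

section
/- Let C be a triangulated category closed under all small coproducts, E a set of compact objects of C, and t the unique t-structure on C whose class C^{t≤0} is the preaisle generated by E. Then the truncation functors τ^{≤0} and τ^{≥0} and the cohomology functor H^0 = τ^{≥0} ∘ τ^{≤0} associated with t commute with all small coproducts: for every small family (X_i) of objects of C the canonical morphisms ∐_i τ^{≤0}(X_i) → τ^{≤0}(∐_i X_i), ∐_i τ^{≥0}(X_i) → τ^{≥0}(∐_i X_i), and ∐_i H^0(X_i) → H^0(∐_i X_i) are isomorphisms. -/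
/-!
Statement 1: Let `C` be a triangulated category closed under all small coproducts,
`E` a set of compact objects and `t` the unique t-structure whose aisle `C^{t≤0}` is the
preaisle generated by `E`. Then the truncation functors `τ^{≤0}`, `τ^{≥0}` and the cohomology
functor `H^0 = τ^{≥0} ∘ τ^{≤0}` commute with all small coproducts: the canonical morphisms
`∐ τ^{≤0}(X_i) → τ^{≤0}(∐ X_i)`, `∐ τ^{≥0}(X_i) → τ^{≥0}(∐ X_i)` and
`∐ H^0(X_i) → H^0(∐ X_i)` are isomorphisms.
-/

open CategoryTheory CategoryTheory.Limits CategoryTheory.Pretriangulated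

universe v u

/-- An object `e` of a preadditive category with coproducts is *compact* if for every small
family `(X_i)` the canonical map `⊕_i Hom(e, X_i) → Hom(e, ∐_i X_i)` is bijective. -/
def IsCompactObject {C : Type u} [Category.{v} C] [Preadditive C] [HasCoproducts.{v} C]
    (e : C) : Prop :=
  ∀ ⦃ι : Type v⦄ [DecidableEq ι] (f : ι → C),
    Function.Bijective
      (DFinsupp.sumAddHom (fun i => Preadditive.rightComp e (Sigma.ι f i)) :
        (Π₀ i : ι, (e ⟶ f i)) →+ (e ⟶ ∐ f))

/-- A *t-structure* on a pretriangulated category `C` is a pair `(le, ge)` of strict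
(isomorphism-closed) classes of objects such that `le[1] ⊆ le`, `ge ⊆ ge[1]`,
`Hom(X, Y) = 0` for `X ∈ le` and `Y ∈ ge[-1]`, and every object `M` fits into a
distinguished triangle `A → M → B → A[1]` with `A ∈ le` and `B ∈ ge[-1]`. -/
structure TStructurePair (C : Type u) [Category.{v} C] [HasZeroObject C] [Preadditive C]
    [HasShift C ℤ] [∀ n : ℤ, (shiftFunctor C n).Additive] [Pretriangulated C] where
  le : Set C
  ge : Set C
  le_iso : ∀ ⦃X Y : C⦄, (X ≅ Y) → X ∈ le → Y ∈ le
  ge_iso : ∀ ⦃X Y : C⦄, (X ≅ Y) → X ∈ ge → Y ∈ ge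
  le_shift : ∀ X ∈ le, X⟦(1 : ℤ)⟧ ∈ le
  ge_shift : ∀ X ∈ ge, X⟦(-1 : ℤ)⟧ ∈ ge
  hom_zero : ∀ ⦃X Y : C⦄, X ∈ le → (Y⟦(1 : ℤ)⟧ ∈ ge) → ∀ f : X ⟶ Y, f = 0
  exists_triangle : ∀ M : C, ∃ (A B : C) (f : A ⟶ M) (g : M ⟶ B) (h : B ⟶ A⟦(1 : ℤ)⟧),
    A ∈ le ∧ B⟦(1 : ℤ)⟧ ∈ ge ∧ Triangle.mk f g h ∈ distTriang C

/-- A *preaisle* in a triangulated category with coproducts is a class of objects containing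
the zero objects, closed under the shift `X ↦ X[1]`, closed under extensions, and closed
under all small coproducts. -/
def IsPreaisle {C : Type u} [Category.{v} C] [HasZeroObject C] [Preadditive C]
    [HasShift C ℤ] [∀ n : ℤ, (shiftFunctor C n).Additive] [Pretriangulated C]
    [HasCoproducts.{v} C] (P : Set C) : Prop :=
  (∀ X : C, IsZero X → X ∈ P) ∧
  (∀ X ∈ P, X⟦(1 : ℤ)⟧ ∈ P) ∧
  (∀ T : Triangle C, T ∈ (distTriang C) → T.obj₁ ∈ P → T.obj₃ ∈ P → T.obj₂ ∈ P) ∧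
  (∀ ⦃ι : Type v⦄ (f : ι → C), (∀ i, f i ∈ P) → (∐ f) ∈ P)

/-- The preaisle generated by a set of objects `E`: the smallest preaisle containing `E`. -/
def preaisleGenerated {C : Type u} [Category.{v} C] [HasZeroObject C] [Preadditive C]
    [HasShift C ℤ] [∀ n : ℤ, (shiftFunctor C n).Additive] [Pretriangulated C]
    [HasCoproducts.{v} C] (E : Set C) : Set C :=
  ⋂₀ {P : Set C | IsPreaisle P ∧ E ⊆ P}


/-!
The coproduct of the truncation triangles `τ^{≤0} X_i → X_i → τ^{≥1} X_i →` is distinguished.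
Its first term lies in the aisle, which is closed under coproducts. Its third term receives no
nonzero map from the aisle: by compactness a map from a generator into `∐ τ^{≥1} X_i` factors
through a finite sum of maps into the `τ^{≥1} X_i`, which vanish, and the objects with this
property form a preaisle. Hence this triangle is a truncation triangle of `∐ X_i`, so `τ^{≤0}`
and `τ^{≥1}` commute with coproducts; `τ^{≥0}` and `H^0` are composites of these with shifts.
-/

universe w

open CategoryTheory.Category

namespace CategoryTheory.Limits

lemma sigmaComparison_naturality {C : Type u} [Category.{v} C] {D : Type*} [Category D]
    (F : C ⥤ D) {J : Type w} {X Y : J → C} [HasCoproduct X] [HasCoproduct Y]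
    [HasCoproduct fun j => F.obj (X j)] [HasCoproduct fun j => F.obj (Y j)]
    (a : ∀ j, X j ⟶ Y j) :
    sigmaComparison F X ≫ F.map (Sigma.map a) =
      Sigma.map (fun j => F.map (a j)) ≫ sigmaComparison F Y :=
  Sigma.hom_ext _ _ fun j => by
    simp only [ι_comp_sigmaComparison_assoc, Sigma.ι_map_assoc, ι_comp_sigmaComparison,
      ← F.map_comp, Sigma.ι_map]

lemma Sigma.exists_eq_map_comp {C : Type u} [Category.{v} C] {J : Type w} {X Y : J → C}
    [HasCoproduct X] [HasCoproduct Y] (a : ∀ j, X j ⟶ Y j) {A : C} (u : ∐ X ⟶ A)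
    (h : ∀ j, ∃ b : Y j ⟶ A, Sigma.ι X j ≫ u = a j ≫ b) :
    ∃ b : ∐ Y ⟶ A, u = Sigma.map a ≫ b := by
  choose b hb using h
  exact ⟨Sigma.desc b, Sigma.hom_ext _ _ fun j => by simp [hb]⟩

lemma preservesColimitsOfShape_discrete_of_isIso_sigmaComparison {C : Type u} [Category.{v} C]
    {D : Type*} [Category D] {J : Type w} [HasCoproductsOfShape J C] [HasCoproductsOfShape J D]
    (F : C ⥤ D) (h : ∀ X : J → C, IsIso (sigmaComparison F X)) :
    PreservesColimitsOfShape (Discrete J) F :=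
  have : ∀ X : J → C, PreservesColimit (Discrete.functor X) F := fun X =>
    have := h X
    PreservesCoproduct.of_iso_comparison F X
  preservesColimitsOfShape_of_discrete F

end CategoryTheory.Limits

namespace CategoryTheory

lemma forall_shift_hom_eq_zero_iff {C : Type u} [Category.{v} C] [Preadditive C]
    [HasShift C ℤ] (n : ℤ) (X Y : C) :
    (∀ g : X⟦n⟧ ⟶ Y, g = 0) ↔ ∀ g : X ⟶ Y⟦-n⟧, g = 0 := by
  simp only [← subsingleton_iff_forall_eq (0 : _ ⟶ _)]
  exact ((shiftEquiv C n).toAdjunction.homEquiv X Y).subsingleton_congr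

end CategoryTheory

namespace CategoryTheory.Pretriangulated

variable {C : Type u} [Category.{v} C] [HasZeroObject C] [Preadditive C]
  [HasShift C ℤ] [∀ n : ℤ, (CategoryTheory.shiftFunctor C n).Additive] [Pretriangulated C]

section CoproductTriangle

variable {J : Type w} [HasCoproductsOfShape J C] (T : J → Triangle C)

/-- An `abbrev` built with `Triangle.mk'`, so that its objects are reducibly the coproducts and
`simp` sees through them. -/
@[simps!]
noncomputable abbrev coproductTriangle : Triangle C :=
  Triangle.mk' _ _ _ (Limits.Sigma.map fun j => (T j).mor₁) (Limits.Sigma.map fun j => (T j).mor₂)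
    (Limits.Sigma.map (fun j => (T j).mor₃) ≫ sigmaComparison (shiftFunctor C (1 : ℤ)) _)

/-- The five lemma for `Hom(-, A)`, applied to the coproduct triangle (whose long exact sequence
is a product of exact ones) and the cone of `∐ (T j).mor₁`. -/
lemma coproductTriangle.isIso_of_comm (hT : ∀ j, T j ∈ distTriang C) {Z : C}
    {f₂ : (∐ fun j => (T j).obj₂) ⟶ Z} {f₃ : Z ⟶ (∐ fun j => (T j).obj₁)⟦(1 : ℤ)⟧}
    (hT' : Triangle.mk' _ _ _ (Limits.Sigma.map fun j => (T j).mor₁) f₂ f₃ ∈ distTriang C)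
    (h : (∐ fun j => (T j).obj₃) ⟶ Z) (comm₂ : (coproductTriangle T).mor₂ ≫ h = f₂)
    (comm₃ : (coproductTriangle T).mor₃ = h ≫ f₃) : IsIso h := by
  have cancel : ∀ {A : C} (f : Z ⟶ A), h ≫ f = 0 → f = 0 := by
    intro A f hf
    obtain ⟨g, rfl⟩ := Triangle.yoneda_exact₃ _ hT' f (by
      change f₂ ≫ f = 0
      rw [← comm₂, assoc, hf, comp_zero])
    obtain ⟨b, hb⟩ := Limits.Sigma.exists_eq_map_comp (fun j => (T j).mor₁⟦(1 : ℤ)⟧')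
      (sigmaComparison (shiftFunctor C (1 : ℤ)) _ ≫ g) fun j => by
        have : (T j).mor₃ ≫ (Sigma.ι (fun j => (T j).obj₁) j)⟦(1 : ℤ)⟧' ≫ g = 0 := by
          have hι : (T j).mor₃ ≫ (Sigma.ι (fun j => (T j).obj₁) j)⟦(1 : ℤ)⟧' =
              Sigma.ι _ j ≫ h ≫ f₃ := by rw [← comm₃]; simp
          rw [reassoc_of% hι, hf, comp_zero]
        obtain ⟨b, hb⟩ : ∃ b : (T j).obj₂⟦(1 : ℤ)⟧ ⟶ A,
            (Sigma.ι (fun j => (T j).obj₁) j)⟦(1 : ℤ)⟧' ≫ g = (-(T j).mor₁⟦(1 : ℤ)⟧') ≫ b :=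
          Triangle.yoneda_exact₃ _ (rot_of_distTriang _ (hT j)) _ this
        exact ⟨-b, by simp [hb]⟩
    have hg : g = (Limits.Sigma.map fun j => (T j).mor₁)⟦(1 : ℤ)⟧' ≫
        inv (sigmaComparison (shiftFunctor C (1 : ℤ)) _) ≫ b := by
      rw [← cancel_epi (sigmaComparison (shiftFunctor C (1 : ℤ)) _), hb,
        reassoc_of% (sigmaComparison_naturality _ _), IsIso.hom_inv_id_assoc]
    rw [hg]
    exact (comp_distTriang_mor_zero₃₁_assoc _ hT' _).trans zero_comp
  have surj : ∀ {A : C} (a : (∐ fun j => (T j).obj₃) ⟶ A), ∃ a', h ≫ a' = a := by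
    intro A a
    obtain ⟨a', ha'⟩ := Triangle.yoneda_exact₂ _ hT' ((coproductTriangle T).mor₂ ≫ a) <|
      Limits.Sigma.hom_ext _ _ fun j => by simp [comp_distTriang_mor_zero₁₂_assoc _ (hT j)]
    obtain ⟨e, he⟩ := Limits.Sigma.exists_eq_map_comp (fun j => (T j).mor₃) (a - h ≫ a')
      fun j => Triangle.yoneda_exact₃ _ (hT j) _ <| by
        have hι : (T j).mor₂ ≫ Sigma.ι (fun j => (T j).obj₃) j =
            Sigma.ι (fun j => (T j).obj₂) j ≫ (coproductTriangle T).mor₂ := by simp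
        simp only [Preadditive.comp_sub]
        rw [sub_eq_zero, reassoc_of% hι, reassoc_of% hι, ha', reassoc_of% comm₂]
    refine ⟨a' + f₃ ≫ inv (sigmaComparison (shiftFunctor C (1 : ℤ)) _) ≫ e, ?_⟩
    rw [Preadditive.comp_add, ← assoc, ← comm₃, coproductTriangle_mor₃, assoc,
      IsIso.hom_inv_id_assoc, ← he, add_sub_cancel]
  refine isIso_of_coyoneda_map_bijective _ fun A => ⟨fun a₁ a₂ h => ?_, fun a => surj a⟩
  rw [← sub_eq_zero]
  exact cancel _ (by rw [Preadditive.comp_sub]; exact sub_eq_zero.2 h)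

lemma coproductTriangle_distinguished (hT : ∀ j, T j ∈ distTriang C) :
    coproductTriangle T ∈ distTriang C := by
  obtain ⟨Z, f₂, f₃, hT'⟩ := distinguished_cocone_triangle (Limits.Sigma.map fun j => (T j).mor₁)
  change Triangle.mk' _ _ _ _ f₂ f₃ ∈ distTriang C at hT'
  let φ : ∀ j, T j ⟶ Triangle.mk' _ _ _ _ f₂ f₃ := fun j =>
    completeDistinguishedTriangleMorphism _ _ (hT j) hT'
      (Sigma.ι (fun j => (T j).obj₁) j) (Sigma.ι (fun j => (T j).obj₂) j) (by simp)
  let h := Limits.Sigma.desc fun j => (φ j).hom₃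
  have comm₂ : (coproductTriangle T).mor₂ ≫ h = f₂ :=
    Limits.Sigma.hom_ext _ _ fun j => by simp [h, φ]
  have comm₃ : (coproductTriangle T).mor₃ = h ≫ f₃ :=
    Limits.Sigma.hom_ext _ _ fun j => by simpa [h, φ] using (φ j).comm₃
  have := coproductTriangle.isIso_of_comm T hT hT' h comm₂ comm₃
  exact isomorphic_distinguished _ hT' _
    (Triangle.isoMk _ _ (Iso.refl _) (Iso.refl _) (asIso h) (by simp) (by simpa using comm₂)
      (by simpa using comm₃))

end CoproductTriangle

lemma Triangle.comp_mor₁_bijective {T : Triangle C} (hT : T ∈ distTriang C) {W : C}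
    (h₀ : ∀ g : W ⟶ T.obj₃, g = 0) (h₁ : ∀ g : W⟦(1 : ℤ)⟧ ⟶ T.obj₃, g = 0) :
    Function.Bijective fun g : W ⟶ T.obj₁ => g ≫ T.mor₁ := by
  refine ⟨fun g₁ g₂ hg => ?_, fun f => ?_⟩
  · rw [← sub_eq_zero]
    obtain ⟨k, hk⟩ := Triangle.coyoneda_exact₂ _ (inv_rot_of_distTriang _ hT) (g₁ - g₂)
      ((Preadditive.sub_comp _ _ _).trans (sub_eq_zero.2 hg))
    rw [hk, (forall_shift_hom_eq_zero_iff 1 W T.obj₃).1 h₁ k]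
    exact zero_comp
  · obtain ⟨g, hg⟩ := Triangle.coyoneda_exact₂ T hT f (h₀ _)
    exact ⟨g, hg.symm⟩

lemma Triangle.mor₂_comp_injective {T : Triangle C} (hT : T ∈ distTriang C) {Z : C}
    (h : ∀ g : T.obj₁⟦(1 : ℤ)⟧ ⟶ Z, g = 0) :
    Function.Injective fun g : T.obj₃ ⟶ Z => T.mor₂ ≫ g := by
  intro g₁ g₂ hg
  rw [← sub_eq_zero]
  obtain ⟨k, hk⟩ := Triangle.yoneda_exact₃ T hT (g₁ - g₂)
    (by simpa [Preadditive.comp_sub, sub_eq_zero] using hg)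
  rw [hk, h k, comp_zero]

/-- For `W ∈ P`, composition with `T.mor₁` and `T'.mor₁` identifies `Hom(W, T.obj₁)` and
`Hom(W, T'.obj₁)` with `Hom(W, T.obj₂) ≅ Hom(W, T'.obj₂)`; then Yoneda within `P`. -/
lemma isIso_hom₁_of_isIso_hom₂ (P : Set C) (hP : ∀ W ∈ P, W⟦(1 : ℤ)⟧ ∈ P) {T T' : Triangle C}
    (hT : T ∈ distTriang C) (hT' : T' ∈ distTriang C) (φ : T ⟶ T') [IsIso φ.hom₂]
    (h₁ : T.obj₁ ∈ P) (h₁' : T'.obj₁ ∈ P) (h₃ : ∀ W ∈ P, ∀ g : W ⟶ T.obj₃, g = 0)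
    (h₃' : ∀ W ∈ P, ∀ g : W ⟶ T'.obj₃, g = 0) : IsIso φ.hom₁ := by
  have bij : ∀ {S : Triangle C}, S ∈ distTriang C → (∀ W ∈ P, ∀ g : W ⟶ S.obj₃, g = 0) →
      ∀ {W}, W ∈ P → Function.Bijective fun g : W ⟶ S.obj₁ => g ≫ S.mor₁ :=
    fun hS hS₃ W hW => Triangle.comp_mor₁_bijective hS (hS₃ W hW) (hS₃ _ (hP W hW))
  obtain ⟨ψ, hψ⟩ := (bij hT h₃ h₁').2 (T'.mor₁ ≫ inv φ.hom₂)
  replace hψ : ψ ≫ T.mor₁ = T'.mor₁ ≫ inv φ.hom₂ := hψ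
  refine ⟨ψ, (bij hT h₃ h₁).1 ?_, (bij hT' h₃' h₁').1 ?_⟩
  · simp only [assoc, hψ, ← φ.comm₁_assoc, IsIso.hom_inv_id, comp_id, id_comp]
  · simp only [assoc, ← φ.comm₁, reassoc_of% hψ, IsIso.inv_hom_id, comp_id, id_comp]

end CategoryTheory.Pretriangulated

section Preaisle

variable {C : Type u} [Category.{v} C] [HasZeroObject C] [Preadditive C]
  [HasShift C ℤ] [∀ n : ℤ, (shiftFunctor C n).Additive] [Pretriangulated C]
  [HasCoproducts.{v} C]

lemma isPreaisle_preaisleGenerated (E : Set C) : IsPreaisle (preaisleGenerated E) :=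
  ⟨fun X hX => Set.mem_sInter.2 fun _ hP => hP.1.1 X hX,
    fun X hX => Set.mem_sInter.2 fun P hP => hP.1.2.1 X (Set.mem_sInter.1 hX P hP),
    fun T hT h₁ h₃ => Set.mem_sInter.2 fun P hP =>
      hP.1.2.2.1 T hT (Set.mem_sInter.1 h₁ P hP) (Set.mem_sInter.1 h₃ P hP),
    fun _ f hf => Set.mem_sInter.2 fun P hP =>
      hP.1.2.2.2 f fun i => Set.mem_sInter.1 (hf i) P hP⟩

lemma subset_preaisleGenerated (E : Set C) : E ⊆ preaisleGenerated E :=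
  fun _ hx => Set.mem_sInter.2 fun _ hP => hP.2 hx

lemma preaisleGenerated_subset {E P : Set C} (hP : IsPreaisle P) (hEP : E ⊆ P) :
    preaisleGenerated E ⊆ P :=
  fun _ hx => Set.mem_sInter.1 hx P ⟨hP, hEP⟩

end Preaisle

namespace TStructurePair

variable {C : Type u} [Category.{v} C] [HasZeroObject C] [Preadditive C]
  [HasShift C ℤ] [∀ n : ℤ, (shiftFunctor C n).Additive] [Pretriangulated C]
  (t : TStructurePair C)

lemma mem_ge_of_shift_mem_ge {Y : C} (hY : Y⟦(1 : ℤ)⟧ ∈ t.ge) : Y ∈ t.ge :=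
  t.ge_iso ((shiftFunctorCompIsoId C (1 : ℤ) (-1) (by norm_num)).app Y) (t.ge_shift _ hY)

lemma eq_zero_of_mem_preaisleGenerated [HasCoproducts.{v} C] {E : Set C}
    (hE : ∀ e ∈ E, IsCompactObject e) (hEt : E ⊆ t.le) {W : C} (hW : W ∈ preaisleGenerated E)
    {J : Type v} (B : J → C) (hB : ∀ j, (B j)⟦(1 : ℤ)⟧ ∈ t.ge) (g : W ⟶ ∐ B) : g = 0 := by
  refine preaisleGenerated_subset (P := {W | ∀ (J : Type v) (B : J → C),
    (∀ j, (B j)⟦(1 : ℤ)⟧ ∈ t.ge) → ∀ g : W ⟶ ∐ B, g = 0}) ⟨?_, ?_, ?_, ?_⟩ ?_ hW J B hB g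
  · exact fun X hX _ _ _ g => hX.eq_of_src _ _
  · intro X hX J B hB
    refine (forall_shift_hom_eq_zero_iff 1 X (∐ B)).2 fun g => ?_
    have hB' : ∀ j, (B j)⟦(-1 : ℤ)⟧⟦(1 : ℤ)⟧ ∈ t.ge := fun j =>
      t.ge_iso ((shiftFunctorCompIsoId C (-1 : ℤ) 1 (by norm_num)).app (B j)).symm
        (t.mem_ge_of_shift_mem_ge (hB j))
    rw [← cancel_mono (inv (sigmaComparison (shiftFunctor C (-1 : ℤ)) B)), zero_comp]
    exact hX J _ hB' _
  · intro T hT h₁ h₃ J B hB g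
    obtain ⟨k, rfl⟩ := Triangle.yoneda_exact₂ T hT g (h₁ J B hB _)
    rw [h₃ J B hB k, comp_zero]
  · exact fun K f hf J B hB g =>
      Sigma.hom_ext _ _ fun k => by rw [hf k J B hB (Sigma.ι f k ≫ g), comp_zero]
  · intro e he J B hB g
    classical
    obtain ⟨d, rfl⟩ := (hE e he B).2 g
    rw [show d = 0 from DFinsupp.ext fun j => t.hom_zero (hEt he) (hB j) _, map_zero]

/-- The coproduct of the truncation triangles of the `Y j` is a truncation triangle of `∐ Y`. -/
lemma isIso_sigmaComparison_truncation [HasCoproducts.{v} C]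
    (hcoprod : ∀ ⦃J : Type v⦄ (f : J → C), (∀ j, f j ∈ t.le) → ∐ f ∈ t.le)
    (horth : ∀ W ∈ t.le, ∀ {J : Type v} (B : J → C), (∀ j, (B j)⟦(1 : ℤ)⟧ ∈ t.ge) →
      ∀ g : W ⟶ ∐ B, g = 0)
    (τle τge1 : C ⥤ C) (α : τle ⟶ 𝟭 C) (β : 𝟭 C ⟶ τge1)
    (δ : ∀ M : C, τge1.obj M ⟶ (τle.obj M)⟦(1 : ℤ)⟧) (hle : ∀ M : C, τle.obj M ∈ t.le)
    (hge : ∀ M : C, (τge1.obj M)⟦(1 : ℤ)⟧ ∈ t.ge)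
    (htri : ∀ M : C, Triangle.mk (α.app M) (β.app M) (δ M) ∈ distTriang C)
    {J : Type v} (Y : J → C) :
    IsIso (sigmaComparison τle Y) ∧ IsIso (sigmaComparison τge1 Y) := by
  let T : J → Triangle C := fun j => Triangle.mk' _ _ _ (α.app (Y j)) (β.app (Y j)) (δ (Y j))
  have hT := coproductTriangle_distinguished T fun j => htri (Y j)
  have comm₁ : (Limits.Sigma.map fun j => α.app (Y j)) ≫ 𝟙 (∐ Y) =
      sigmaComparison τle Y ≫ α.app (∐ Y) :=
    Sigma.hom_ext _ _ fun j => by simp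
  let ψ := completeDistinguishedTriangleMorphism _ _ hT (htri (∐ Y)) (sigmaComparison τle Y)
    (𝟙 _) comm₁
  have : IsIso ψ.hom₂ := IsIso.id (∐ Y)
  have hψ₁ : IsIso ψ.hom₁ := isIso_hom₁_of_isIso_hom₂ t.le t.le_shift hT (htri _) ψ
    (hcoprod _ fun j => hle (Y j)) (hle _) (fun W hW => horth W hW _ fun j => hge (Y j))
    (fun W hW g => t.hom_zero hW (hge _) g)
  have hψ₃ : IsIso ψ.hom₃ := isIso₃_of_isIso₁₂ ψ hT (htri _) hψ₁ inferInstance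
  have hψ₃_eq : sigmaComparison τge1 Y = ψ.hom₃ := by
    refine Triangle.mor₂_comp_injective hT
      (fun g => t.hom_zero (t.le_shift _ (hcoprod _ fun j => hle (Y j))) (hge _) g) ?_
    have comm₂ : (Limits.Sigma.map fun j => β.app (Y j)) ≫ sigmaComparison τge1 Y =
        𝟙 (∐ Y) ≫ β.app (∐ Y) :=
      Sigma.hom_ext _ _ fun j => by simpa using (β.naturality (Sigma.ι Y j)).symm
    exact comm₂.trans ψ.comm₂.symm
  exact ⟨hψ₁, hψ₃_eq ▸ hψ₃⟩

end TStructurePair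

/-- `τle = τ^{≤0}` and `τge1 = τ^{≥1}` come with `α : τ^{≤0} → id`, `β : id → τ^{≥1}` and the
connecting morphisms `δ` of the truncation triangles; the three conjuncts concern `τ^{≤0}`,
`τ^{≥0} = (M ↦ τ^{≥1}(M[-1])[1])` and `H^0 = τ^{≥0} ∘ τ^{≤0}`. -/
theorem truncation_commutes_with_coproducts
    {C : Type u} [Category.{v} C] [HasZeroObject C] [Preadditive C]
    [HasShift C ℤ] [∀ n : ℤ, (shiftFunctor C n).Additive] [Pretriangulated C] [IsTriangulated C]
    [HasCoproducts.{v} C]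
    (E : Set C) (hE : ∀ e ∈ E, IsCompactObject e)
    (t : TStructurePair C) (ht : t.le = preaisleGenerated E)
    (τle τge1 : C ⥤ C) (α : τle ⟶ 𝟭 C) (β : 𝟭 C ⟶ τge1)
    (δ : ∀ M : C, τge1.obj M ⟶ (τle.obj M)⟦(1 : ℤ)⟧)
    (hle : ∀ M : C, τle.obj M ∈ t.le)
    (hge : ∀ M : C, (τge1.obj M)⟦(1 : ℤ)⟧ ∈ t.ge)
    (htri : ∀ M : C, Triangle.mk (α.app M) (β.app M) (δ M) ∈ distTriang C)
    {ι : Type v} (X : ι → C) :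
    IsIso (sigmaComparison τle X) ∧
    IsIso (sigmaComparison (shiftFunctor C (-1 : ℤ) ⋙ τge1 ⋙ shiftFunctor C (1 : ℤ)) X) ∧
    IsIso (sigmaComparison
      (τle ⋙ shiftFunctor C (-1 : ℤ) ⋙ τge1 ⋙ shiftFunctor C (1 : ℤ)) X) := by
  have hPre : IsPreaisle t.le := ht ▸ isPreaisle_preaisleGenerated E
  have hEt : E ⊆ t.le := ht ▸ subset_preaisleGenerated E
  have key (Y : ι → C) : IsIso (sigmaComparison τle Y) ∧ IsIso (sigmaComparison τge1 Y) :=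
    t.isIso_sigmaComparison_truncation hPre.2.2.2
      (fun W hW _ B hB g => t.eq_zero_of_mem_preaisleGenerated hE hEt (ht ▸ hW) B hB g)
      τle τge1 α β δ hle hge htri Y
  have := preservesColimitsOfShape_discrete_of_isIso_sigmaComparison τle fun Y => (key Y).1
  have := preservesColimitsOfShape_discrete_of_isIso_sigmaComparison τge1 fun Y => (key Y).2
  exact ⟨inferInstance, inferInstance, inferInstance⟩
end

section
/- Let X be a nonempty T0, quasi-sober, Noetherian topological space of finite Krull dimension, and let δ₁ and δ₂ be two dimension functions on X. Then the difference δ₁ − δ₂ is constant on every connected component of X; in particular δ₁ − δ₂ is a locally constant function on X. -/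
/-- `y` is an *immediate specialization* of `x` if `y ∈ closure {x}`, `y ≠ x`, and every
point `z` with `z ∈ closure {x}` and `y ∈ closure {z}` equals `x` or `y`. -/
def ImmediateSpecialization {X : Type*} [TopologicalSpace X] (x y : X) : Prop :=
  y ∈ closure {x} ∧ y ≠ x ∧ ∀ z : X, z ∈ closure {x} → y ∈ closure {z} → z = x ∨ z = y

/-- A *dimension function* on a topological space `X` is a map `δ : X → ℤ` such that
`δ(x) = δ(y) + 1` whenever `y` is an immediate specialization of `x`. -/
def IsDimensionFunction {X : Type*} [TopologicalSpace X] (δ : X → ℤ) : Prop :=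
  ∀ x y : X, ImmediateSpecialization x y → δ x = δ y + 1

/-!
The difference `f = δ₁ - δ₂` is invariant under immediate specializations. These are exactly the
covering relations of the specialization order, and finite Krull dimension makes that order
well-founded in both directions, so every specialization `x ⤳ y` is a finite chain of immediate
ones and `f x = f y`. By quasi-soberness `f` is then constant on each irreducible component; a
Noetherian space has finitely many of them, all closed, so every point has an open neighbourhood,
the complement of the components missing it, on which `f` is constant.
-/

open Order TopologicalSpace

namespace Order

variable {α : Type*} [Preorder α]

lemma wellFoundedGT_of_krullDim_ne_top (h : krullDim α ≠ ⊤) : WellFoundedGT α := by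
  rcases isEmpty_or_nonempty α with hα | hα
  · infer_instance
  · have : FiniteDimensionalOrder α :=
      finiteDimensionalOrder_iff_krullDim_ne_bot_and_top.2 ⟨krullDim_ne_bot_iff.2 hα, h⟩
    exact ⟨SetRel.IsWellFounded.inv_of_finiteDimensional {(a, b) : α × α | a < b}⟩

lemma wellFoundedLT_of_krullDim_ne_top (h : krullDim α ≠ ⊤) : WellFoundedLT α :=
  wellFoundedGT_of_krullDim_ne_top (α := αᵒᵈ) (by rwa [krullDim_orderDual])

end Order

lemma apply_eq_of_le_of_forall_covBy {α β : Type*} [PartialOrder α] [WellFoundedLT α]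
    [WellFoundedGT α] {f : α → β} (hf : ∀ a b, a ⋖ b → f a = f b) {a b : α} (hab : a ≤ b) :
    f a = f b := by
  obtain ⟨s, rfl, n, rfl, hs⟩ := exists_covBy_seq_of_wellFoundedLT_wellFoundedGT_of_le hab
  suffices ∀ i ≤ n, f (s 0) = f (s i) from this n le_rfl
  intro i hi
  induction i with
  | zero => rfl
  | succ i ih => exact (ih (by omega)).trans (hf _ _ (hs i (by omega)))

section

variable {X : Type*} [TopologicalSpace X]

lemma krullDim_specialization [QuasiSober X] [T0Space X] :
    krullDim (Specialization X) = topologicalKrullDim X :=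
  (krullDim_eq_of_orderIso (α := IrreducibleCloseds X) (β := Specialization X)
    irreducibleSetEquivPoints).symm

open Specialization in
lemma immediateSpecialization_iff_covBy [T0Space X] {x y : X} :
    ImmediateSpecialization x y ↔ toEquiv y ⋖ toEquiv x := by
  simp only [ImmediateSpecialization, ← specializes_iff_mem_closure]
  constructor
  · rintro ⟨hxy, hne, hbetween⟩
    refine ⟨lt_of_le_of_ne hxy (toEquiv_inj.not.2 hne), fun z hyz hzx => ?_⟩
    induction z with | h z => ?_
    rcases hbetween z hzx.le hyz.le with rfl | rfl
    exacts [hzx.ne rfl, hyz.ne rfl]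
  · rintro ⟨hlt, hmin⟩
    refine ⟨hlt.le, fun h => hlt.ne (congrArg toEquiv h), fun z hxz hzy => ?_⟩
    by_contra! hne
    exact hmin (c := toEquiv z) (lt_of_le_of_ne hzy (toEquiv_inj.not.2 hne.2.symm))
      (lt_of_le_of_ne hxz (toEquiv_inj.not.2 hne.1))

theorem Specializes.apply_eq_of_forall_immediateSpecialization [QuasiSober X] [T0Space X]
    {β : Type*} (hdim : topologicalKrullDim X ≠ ⊤) {f : X → β}
    (hf : ∀ a b, ImmediateSpecialization a b → f a = f b) {x y : X} (hxy : x ⤳ y) :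
    f x = f y := by
  have hdim' : krullDim (Specialization X) ≠ ⊤ := by rwa [krullDim_specialization]
  have := wellFoundedLT_of_krullDim_ne_top hdim'
  have := wellFoundedGT_of_krullDim_ne_top hdim'
  refine (apply_eq_of_le_of_forall_covBy (f := f ∘ Specialization.ofEquiv) (fun a b hab => ?_)
    (Specialization.toEquiv_le_toEquiv.2 hxy)).symm
  exact (hf _ _ (immediateSpecialization_iff_covBy.2 hab)).symm

theorem IsIrreducible.apply_eq_of_forall_specializes [QuasiSober X] {β : Type*} {f : X → β}
    (hf : ∀ a b, a ⤳ b → f a = f b) {S : Set X} (hS : IsIrreducible S) {x y : X}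
    (hx : x ∈ S) (hy : y ∈ S) : f x = f y :=
  have hgen := hS.isGenericPoint_genericPoint_closure
  (hf _ _ (hgen.specializes (subset_closure hx))).symm.trans
    (hf _ _ (hgen.specializes (subset_closure hy)))

theorem TopologicalSpace.NoetherianSpace.isLocallyConstant_of_forall_irreducibleComponents
    [NoetherianSpace X] {β : Type*} {f : X → β}
    (hf : ∀ C ∈ irreducibleComponents X, ∀ x ∈ C, ∀ y ∈ C, f x = f y) : IsLocallyConstant f := by
  refine (IsLocallyConstant.iff_exists_open f).2 fun x => ?_
  refine ⟨(⋃ C ∈ {C ∈ irreducibleComponents X | x ∉ C}, C)ᶜ, ?_, ?_, fun y hy => ?_⟩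
  · exact (NoetherianSpace.finite_irreducibleComponents.subset (Set.sep_subset _ _))
      |>.isClosed_biUnion (fun C hC => isClosed_of_mem_irreducibleComponents C hC.1)
      |>.isOpen_compl
  · simp
  · have hxy : x ∈ irreducibleComponent y := by
      by_contra hx
      exact hy (Set.mem_biUnion ⟨irreducibleComponent_mem_irreducibleComponents y, hx⟩
        mem_irreducibleComponent)
    exact hf _ (irreducibleComponent_mem_irreducibleComponents y) _ mem_irreducibleComponent _ hxy

end

theorem dimensionFunction_sub_locallyConstant_general
    {X : Type*} [TopologicalSpace X] [T0Space X] [QuasiSober X]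
    [TopologicalSpace.NoetherianSpace X] (hdim : topologicalKrullDim X ≠ ⊤)
    {δ₁ δ₂ : X → ℤ} (h₁ : IsDimensionFunction δ₁) (h₂ : IsDimensionFunction δ₂) :
    (∀ x y : X, y ∈ connectedComponent x → δ₁ x - δ₂ x = δ₁ y - δ₂ y) ∧
    IsLocallyConstant fun x => δ₁ x - δ₂ x := by
  set f : X → ℤ := fun x => δ₁ x - δ₂ x
  have hf_immediate : ∀ a b, ImmediateSpecialization a b → f a = f b := fun a b hab => by
    have := h₁ a b hab
    have := h₂ a b hab
    simp only [f]
    omega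
  have hf_specializes : ∀ a b, a ⤳ b → f a = f b := fun _ _ =>
    Specializes.apply_eq_of_forall_immediateSpecialization hdim hf_immediate
  have hf : IsLocallyConstant f :=
    NoetherianSpace.isLocallyConstant_of_forall_irreducibleComponents fun _ hC _ hx _ hy =>
      hC.1.apply_eq_of_forall_specializes hf_specializes hx hy
  exact ⟨fun x y hy => hf.apply_eq_of_isPreconnected isPreconnected_connectedComponent
    mem_connectedComponent hy, hf⟩

/-- Two dimension functions on a nonempty T0, quasi-sober, Noetherian topological space of
finite Krull dimension differ by a function which is constant on every connected component;
in particular their difference is locally constant. -/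
theorem dimensionFunction_sub_locallyConstant
    {X : Type*} [TopologicalSpace X] [Nonempty X] [T0Space X] [QuasiSober X]
    [TopologicalSpace.NoetherianSpace X] (hdim : topologicalKrullDim X ≠ ⊤)
    {δ₁ δ₂ : X → ℤ} (h₁ : IsDimensionFunction δ₁) (h₂ : IsDimensionFunction δ₂) :
    (∀ x y : X, y ∈ connectedComponent x → δ₁ x - δ₂ x = δ₁ y - δ₂ y) ∧
    IsLocallyConstant fun x => δ₁ x - δ₂ x :=
  dimensionFunction_sub_locallyConstant_general hdim h₁ h₂
end
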